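/- Let Bₙ denote the Bell numbers, defined by Σ_{n≥0} Bₙ xⁿ/n! = e^{e^x − 1}. Then the ordinary generating series Σ_{n≥0} Bₙ xⁿ reduced modulo 2 equals the rational series 1/(1 + x + x²) in F₂[[x]]. -/

import Mathlib

/-!
The recurrence says that the shifted sequence `n ↦ B_{n+1}` is the binomial transform
`T b` of `b = (Bₙ)`. Applying `T` twice multiplies the `i`-th term of `Σ C(n,i) a_i` by
`2^(n-i)`, so modulo `2` the transform is an involution and `T (T b) = b`. Pascal's rule
splits `T b (n+1)` as `T b n + T (shift b) n = B_{n+1} + T (T b) n`, which gives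
`B_{n+2} ≡ B_{n+1} + Bₙ (mod 2)`: exactly the recurrence of `1/(1 + x + x²)` over `F₂`.
-/

open PowerSeries

/-- The Bell numbers: `B₀ = 1` and `B_{n+1} = Σ_{k=0}^{n} C(n,k)·B_k`.
`Bₙ` counts the partitions of an `n`-element set. -/
def Bell : ℕ → ℕ
  | 0 => 1
  | n + 1 => ∑ k ∈ (Finset.range (n + 1)).attach, (n.choose k) * Bell k
  decreasing_by exact Finset.mem_range.mp k.2

section BinomialTransform

open Finset

variable {R : Type*} [Semiring R]

def binomialTransform (a : ℕ → R) (n : ℕ) : R :=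
  ∑ k ∈ range (n + 1), (n.choose k : R) * a k

theorem binomialTransform_succ (a : ℕ → R) (n : ℕ) :
    binomialTransform a (n + 1) =
      binomialTransform a n + binomialTransform (fun k ↦ a (k + 1)) n :=
  sum_choose_succ_mul (fun i _ ↦ a i) n

theorem sum_Ico_choose_mul_choose {n i : ℕ} (hi : i ≤ n) :
    ∑ j ∈ Ico i (n + 1), n.choose j * j.choose i = n.choose i * 2 ^ (n - i) := by
  rw [sum_congr rfl fun j hj ↦ Nat.choose_mul (mem_Ico.mp hj).1, ← mul_sum,
    sum_Ico_eq_sum_range, Nat.sub_add_comm hi, ← Nat.sum_range_choose]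
  simp

theorem binomialTransform_binomialTransform (a : ℕ → R) (n : ℕ) :
    binomialTransform (binomialTransform a) n =
      ∑ i ∈ range (n + 1), (n.choose i * 2 ^ (n - i) : ℕ) * a i := by
  simp only [binomialTransform, mul_sum, range_eq_Ico]
  rw [← sum_Ico_Ico_comm]
  refine sum_congr rfl fun i hi ↦ ?_
  rw [← sum_Ico_choose_mul_choose (Nat.lt_succ_iff.mp (mem_Ico.mp hi).2), Nat.cast_sum, sum_mul]
  refine sum_congr rfl fun j _ ↦ ?_
  rw [Nat.cast_mul, mul_assoc]

theorem binomialTransform_binomialTransform_of_charTwo [CharP R 2] (a : ℕ → R) :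
    binomialTransform (binomialTransform a) = a := by
  funext n
  rw [binomialTransform_binomialTransform, sum_range_succ, sum_eq_zero]
  · simp
  intro i hi
  obtain ⟨m, hm⟩ := Nat.exists_eq_add_one.mpr (Nat.sub_pos_of_lt (mem_range.mp hi))
  simp [hm, pow_succ, CharTwo.two_eq_zero]

end BinomialTransform

theorem bell_zero : Bell 0 = 1 := by
  simp [Bell]

theorem bell_succ (n : ℕ) :
    Bell (n + 1) = ∑ k ∈ Finset.range (n + 1), n.choose k * Bell k := by
  rw [Bell, ← Finset.sum_attach (Finset.range (n + 1)) (fun k ↦ n.choose k * Bell k)]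

theorem bell_one : Bell 1 = 1 := by
  simp [bell_succ, bell_zero]

theorem cast_bell_succ {R : Type*} [Semiring R] (n : ℕ) :
    (Bell (n + 1) : R) = binomialTransform (fun k ↦ (Bell k : R)) n := by
  simp [bell_succ, binomialTransform]

theorem cast_bell_add_two_of_charTwo {R : Type*} [Semiring R] [CharP R 2] (n : ℕ) :
    (Bell (n + 2) : R) = Bell (n + 1) + Bell n := by
  set b : ℕ → R := fun k ↦ Bell k
  have shift : (fun k ↦ b (k + 1)) = binomialTransform b := funext cast_bell_succ
  calc b (n + 2) = binomialTransform b (n + 1) := cast_bell_succ (n + 1)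
    _ = binomialTransform b n + binomialTransform (binomialTransform b) n := by
      rw [binomialTransform_succ, shift]
    _ = b (n + 1) + b n := by
      rw [binomialTransform_binomialTransform_of_charTwo, ← shift]

theorem mk_mul_one_add_X_add_X_sq_eq_one {R : Type*} [Semiring R] {c : ℕ → R} (h0 : c 0 = 1)
    (h1 : c 1 + c 0 = 0) (h : ∀ n, c (n + 2) + c (n + 1) + c n = 0) :
    mk c * (1 + X + X ^ 2) = 1 := by
  ext n
  rw [mul_add, mul_add, mul_one, sq, ← mul_assoc]
  rcases n with _ | _ | n
  · simp [h0]
  · simp [coeff_succ_mul_X, h1]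
  · simp [coeff_succ_mul_X, h]

/-- The ordinary generating series of the Bell numbers reduced modulo `2` equals the
rational series `1/(1 + x + x²)` in `F₂[[x]]`. -/
theorem bell_mod_two_rational :
    (PowerSeries.mk fun n => ((Bell n : ZMod 2))) *
      (1 + PowerSeries.X + PowerSeries.X ^ 2) = 1 := by
  refine mk_mul_one_add_X_add_X_sq_eq_one (by simp [bell_zero])
    (by simp [bell_zero, bell_one, CharTwo.add_self_eq_zero]) fun n ↦ ?_
  rw [cast_bell_add_two_of_charTwo, add_assoc, CharTwo.add_self_eq_zero]
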